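/- arXiv:2307.12529 — 5 statements merged into one kernel-verified Lean document; each statement's English description precedes it below -/
import Mathlib

section
/- If for every POVM {F_y} one has ∑_y max_{x∈X} Tr(ρ_x F_y) = 1, then the ensemble is indistinguishable, i.e., ρ_x = ρ_{x'} for all x, x' ∈ X. -/
open Matrix BigOperators ComplexOrder

section AuxLeakage

lemma aux_sum_single {d : ℕ} (i : Fin d) (g : Fin d → ℂ)
    (hg : ∀ k, k ≠ i → g k = 0) : ∑ k, g k = g i :=
  Finset.sum_eq_single_of_mem i (Finset.mem_univ i) (fun k _ hk => hg k hk)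

lemma aux_sum_pair {d : ℕ} {i j : Fin d} (hij : i ≠ j) (g : Fin d → ℂ)
    (hg : ∀ k, k ≠ i → k ≠ j → g k = 0) : ∑ k, g k = g i + g j := by
  rw [← Finset.sum_subset (Finset.subset_univ ({i, j} : Finset (Fin d)))
      (fun k _ hk => by
        simp only [Finset.mem_insert, Finset.mem_singleton, not_or] at hk
        exact hg k hk.1 hk.2)]
  exact Finset.sum_pair hij

lemma aux_trace_mul_vecMulVec {d : ℕ} (A : Matrix (Fin d) (Fin d) ℂ) (v w : Fin d → ℂ) :
    (A * vecMulVec v w).trace = w ⬝ᵥ (A *ᵥ v) := by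
  simp only [trace, diag, mul_apply, vecMulVec_apply, dotProduct, mulVec, Finset.mul_sum]
  refine Finset.sum_congr rfl fun k _ => Finset.sum_congr rfl fun l _ => by ring

/-- the vector with 1 at position i, α at position j, 0 elsewhere -/
def ev {d : ℕ} (i j : Fin d) (α : ℂ) : Fin d → ℂ :=
  fun k => if k = i then 1 else if k = j then α else 0

def e1 {d : ℕ} (i : Fin d) : Fin d → ℂ := fun k => if k = i then 1 else 0

lemma aux_mulVec_ev {d : ℕ} {i j : Fin d} (hij : i ≠ j) (A : Matrix (Fin d) (Fin d) ℂ)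
    (α : ℂ) (k : Fin d) : (A *ᵥ ev i j α) k = A k i + A k j * α := by
  simp only [mulVec, dotProduct]
  rw [aux_sum_pair hij (fun l => A k l * ev i j α l)
    (fun l h1 h2 => by simp [ev, h1, h2])]
  simp [ev, Ne.symm hij]

lemma aux_quad_ev {d : ℕ} {i j : Fin d} (hij : i ≠ j) (A : Matrix (Fin d) (Fin d) ℂ)
    (α : ℂ) : star (ev i j α) ⬝ᵥ (A *ᵥ ev i j α)
      = A i i + A i j * α + star α * (A j i + A j j * α) := by
  simp only [dotProduct, Pi.star_apply]
  rw [aux_sum_pair hij (fun k => star (ev i j α k) * (A *ᵥ ev i j α) k)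
    (fun k h1 h2 => by simp [ev, h1, h2])]
  rw [aux_mulVec_ev hij, aux_mulVec_ev hij]
  simp [ev, Ne.symm hij]

lemma aux_norm_ev {d : ℕ} {i j : Fin d} (hij : i ≠ j) (α : ℂ) :
    star (ev i j α) ⬝ᵥ ev i j α = 1 + star α * α := by
  simp only [dotProduct, Pi.star_apply]
  rw [aux_sum_pair hij (fun k => star (ev i j α k) * ev i j α k)
    (fun k h1 h2 => by simp [ev, h1, h2])]
  simp [ev, Ne.symm hij]

lemma aux_mulVec_e1 {d : ℕ} (i : Fin d) (A : Matrix (Fin d) (Fin d) ℂ) (k : Fin d) :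
    (A *ᵥ e1 i) k = A k i := by
  simp only [mulVec, dotProduct]
  rw [aux_sum_single i (fun l => A k l * e1 i l) (fun l h1 => by simp [e1, h1])]
  simp [e1]

lemma aux_quad_e1 {d : ℕ} (i : Fin d) (A : Matrix (Fin d) (Fin d) ℂ) :
    star (e1 i) ⬝ᵥ (A *ᵥ e1 i) = A i i := by
  simp only [dotProduct, Pi.star_apply]
  rw [aux_sum_single i (fun k => star (e1 i k) * (A *ᵥ e1 i) k)
    (fun k h1 => by simp [e1, h1])]
  rw [aux_mulVec_e1]
  simp [e1]

lemma aux_norm_e1 {d : ℕ} (i : Fin d) : star (e1 i) ⬝ᵥ e1 i = 1 := by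
  simp only [dotProduct, Pi.star_apply]
  rw [aux_sum_single i (fun k => star (e1 i k) * e1 i k) (fun k h1 => by simp [e1, h1])]
  simp [e1]

lemma aux_vmv_mul {d : ℕ} (v w v' w' : Fin d → ℂ) :
    vecMulVec v w * vecMulVec v' w' = (w ⬝ᵥ v') • vecMulVec v w' := by
  ext k l
  simp only [mul_apply, vecMulVec_apply, Matrix.smul_apply, smul_eq_mul, dotProduct, Finset.sum_mul]
  refine Finset.sum_congr rfl fun m _ => by ring

lemma aux_vmv_herm {d : ℕ} (v : Fin d → ℂ) : (vecMulVec v (star v)).IsHermitian := by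
  ext k l
  simp only [conjTranspose_apply, vecMulVec_apply, Pi.star_apply, star_mul', star_star]
  ring

lemma aux_proj_psd {d : ℕ} {F : Matrix (Fin d) (Fin d) ℂ}
    (hH : F.IsHermitian) (hI : F * F = F) : F.PosSemidef ∧ (1 - F).PosSemidef := by
  constructor
  · have : F = Fᴴ * F := by rw [hH.eq, hI]
    rw [this]; exact posSemidef_conjTranspose_mul_self F
  · have hH' : (1 - F)ᴴ = 1 - F := by
      rw [conjTranspose_sub, conjTranspose_one, hH.eq]
    have hI' : (1 - F) * (1 - F) = 1 - F := by
      simp only [sub_mul, mul_sub, one_mul, mul_one, hI]; abel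
    have : (1 - F) = (1 - F)ᴴ * (1 - F) := by rw [hH', hI']
    rw [this]; exact posSemidef_conjTranspose_mul_self _

lemma aux_herm_smul {d : ℕ} (v : Fin d → ℂ) :
    ((((1:ℝ)/2 : ℝ) : ℂ) • vecMulVec v (star v)).IsHermitian := by
  unfold Matrix.IsHermitian
  rw [conjTranspose_smul, (aux_vmv_herm v).eq]
  congr 1
  simp

lemma aux_idem_smul {d : ℕ} (v : Fin d → ℂ) (hv : star v ⬝ᵥ v = 2) :
    ((((1:ℝ)/2 : ℝ) : ℂ) • vecMulVec v (star v)) *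
      ((((1:ℝ)/2 : ℝ) : ℂ) • vecMulVec v (star v))
    = (((1:ℝ)/2 : ℝ) : ℂ) • vecMulVec v (star v) := by
  rw [smul_mul_assoc, mul_smul_comm, aux_vmv_mul, hv, smul_smul, smul_smul]
  norm_num

lemma aux_step1 {d : ℕ} {X : Type} [Fintype X] [Nonempty X]
    (ρ : X → Matrix (Fin d) (Fin d) ℂ)
    (hρtr : ∀ x, (ρ x).trace = 1)
    (h : ∀ (m : ℕ) (F : Fin m → Matrix (Fin d) (Fin d) ℂ),
      (∀ y, (F y).PosSemidef) → (∑ y, F y = 1) →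
      ∑ y, Finset.univ.sup' Finset.univ_nonempty
        (fun x => ((ρ x * F y).trace).re) = 1)
    {F : Matrix (Fin d) (Fin d) ℂ} (hF : F.PosSemidef) (hF' : (1 - F).PosSemidef)
    (x x' : X) : ((ρ x * F).trace).re = ((ρ x' * F).trace).re := by
  set A : X → ℝ := fun z => ((ρ z * F).trace).re with hA
  have key := h 2 ![F, 1 - F]
    (by intro y; fin_cases y <;> simpa)
    (by simp [Fin.sum_univ_two])
  rw [Fin.sum_univ_two] at key
  simp only [Matrix.cons_val_zero, Matrix.cons_val_one, Matrix.head_cons] at key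
  have hB : ∀ z : X, ((ρ z * (1 - F)).trace).re = 1 - A z := by
    intro z
    rw [mul_sub, mul_one, trace_sub, hρtr z]
    simp [A, Complex.sub_re]
  rw [Finset.sup'_congr Finset.univ_nonempty rfl (fun z _ => hB z)] at key
  have hmain : ∀ a b : X, A a ≤ A b := by
    intro a b
    have h1 : A a ≤ Finset.univ.sup' Finset.univ_nonempty A :=
      Finset.le_sup' A (Finset.mem_univ a)
    have h2 : 1 - A b ≤ Finset.univ.sup' Finset.univ_nonempty (fun z => 1 - A z) :=
      Finset.le_sup' (fun z => 1 - A z) (Finset.mem_univ b)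
    linarith
  exact le_antisymm (hmain x x') (hmain x' x)

end AuxLeakage

/-- If for every POVM {F_y} one has ∑_y max_x Tr(ρ_x F_y) = 1, then
the ensemble is indistinguishable: ρ_x = ρ_{x'} for all x, x'. -/
theorem leakage_eq_one_implies_indistinguishable {d : ℕ} (hd : 1 ≤ d)
    {X : Type} [Fintype X] [Nonempty X]
    (ρ : X → Matrix (Fin d) (Fin d) ℂ)
    (hρ : ∀ x, (ρ x).PosSemidef) (hρtr : ∀ x, (ρ x).trace = 1)
    (h : ∀ (m : ℕ) (F : Fin m → Matrix (Fin d) (Fin d) ℂ),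
      (∀ y, (F y).PosSemidef) → (∑ y, F y = 1) →
      ∑ y, Finset.univ.sup' Finset.univ_nonempty
        (fun x => ((ρ x * F y).trace).re) = 1) :
    ∀ x x', ρ x = ρ x' := by
  intro x x'
  have hconj : ∀ (z : X) (i j : Fin d), ρ z j i = starRingEnd ℂ (ρ z i j) := by
    intro z i j
    conv_lhs => rw [← (hρ z).1]
    simp [conjTranspose_apply, Complex.star_def]
  have him0 : ∀ (z : X) (i : Fin d), (ρ z i i).im = 0 := by
    intro z i
    exact Complex.conj_eq_iff_im.mp (hconj z i i).symm
  -- diagonal entries: equal real parts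
  have hdre : ∀ i : Fin d, (ρ x i i).re = (ρ x' i i).re := by
    intro i
    have hpsd := aux_proj_psd (aux_vmv_herm (e1 i))
      (by rw [aux_vmv_mul, aux_norm_e1, one_smul])
    have hre := aux_step1 ρ hρtr h hpsd.1 hpsd.2 x x'
    rwa [aux_trace_mul_vecMulVec, aux_trace_mul_vecMulVec, aux_quad_e1, aux_quad_e1] at hre
  ext i j
  by_cases hij : i = j
  · subst hij
    exact Complex.ext (hdre i) (by rw [him0, him0])
  · -- off-diagonal case with α = 1 and α = I
    have key : ∀ α : ℂ, star α * α = 1 →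
        ((ρ x i i + ρ x i j * α + star α * (ρ x j i + ρ x j j * α)).re
        = (ρ x' i i + ρ x' i j * α + star α * (ρ x' j i + ρ x' j j * α)).re) := by
      intro α hα
      have hnorm : star (ev i j α) ⬝ᵥ ev i j α = 2 := by
        rw [aux_norm_ev hij, hα]; norm_num
      have hpsd := aux_proj_psd (aux_herm_smul (ev i j α)) (aux_idem_smul _ hnorm)
      have hre := aux_step1 ρ hρtr h hpsd.1 hpsd.2 x x'
      rw [mul_smul_comm, mul_smul_comm, trace_smul, trace_smul, smul_eq_mul, smul_eq_mul,
        aux_trace_mul_vecMulVec, aux_trace_mul_vecMulVec, aux_quad_ev hij, aux_quad_ev hij,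
        Complex.re_ofReal_mul, Complex.re_ofReal_mul] at hre
      linarith
    have k1 := key 1 (by simp)
    have k2 := key Complex.I (by simp [Complex.star_def, Complex.conj_I])
    rw [hconj x i j, hconj x' i j] at k1 k2
    simp only [star_one, mul_one, one_mul, Complex.star_def, Complex.conj_I,
      Complex.add_re, Complex.mul_re, Complex.I_re, Complex.I_im, Complex.conj_re,
      Complex.conj_im, Complex.add_im, Complex.mul_im, neg_mul, mul_neg, neg_neg,
      mul_zero, zero_mul, mul_one, one_mul, sub_zero, add_zero, zero_add, zero_sub,
      Complex.neg_re, Complex.neg_im] at k1 k2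
    have hi := hdre i
    have hj := hdre j
    exact Complex.ext (by linarith) (by linarith)
end

section
/- Data-processing inequality for maximal quantum leakage: for any quantum channel given by Kraus operators {E_j} with ∑_j E_j† E_j = I, and any POVM {F_y}, the family {∑_j E_j† F_y E_j}_y is again a POVM, and ∑_y max_x Tr(E(ρ_x) F_y) = ∑_y max_x Tr(ρ_x ∑_j E_j† F_y E_j); consequently the supremum of ∑_y max_x Tr(E(ρ_x) F_y) over POVMs is at most the supremum of ∑_y max_x Tr(ρ_x F_y) over POVMs. -/
open Matrix BigOperators ComplexOrder

lemma psd_trace_re_nonneg {k : ℕ} {M : Matrix (Fin k) (Fin k) ℂ} (hM : M.PosSemidef) :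
    0 ≤ M.trace.re := by
  have h : ∀ i, 0 ≤ (M i i).re := fun i => by
    have := hM.re_dotProduct_nonneg (Pi.single i 1)
    simpa [dotProduct, Matrix.mulVec, Pi.single_apply] using this
  simp only [Matrix.trace, Matrix.diag, Complex.re_sum]
  exact Finset.sum_nonneg fun i _ => h i

open scoped MatrixOrder in
lemma trace_mul_re_nonneg {k : ℕ} {A B : Matrix (Fin k) (Fin k) ℂ}
    (hA : A.PosSemidef) (hB : B.PosSemidef) : 0 ≤ (A * B).trace.re := by
  have h0 : 0 ≤ A := Matrix.nonneg_iff_posSemidef.mpr hA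
  have hsq : (CFC.sqrt A).PosSemidef := Matrix.nonneg_iff_posSemidef.mp (CFC.sqrt_nonneg A)
  have hpsd := hB.mul_mul_conjTranspose_same (CFC.sqrt A)
  rw [hsq.isHermitian.eq] at hpsd
  have heq : (A * B).trace = (CFC.sqrt A * B * CFC.sqrt A).trace := by
    conv_lhs => rw [← congrArg Matrix.trace (congrArg (· * B) (CFC.sqrt_mul_sqrt_self A h0))]
    rw [Matrix.trace_mul_comm, ← mul_assoc, Matrix.trace_mul_cycle]
  rw [heq]
  exact psd_trace_re_nonneg hpsd

/-- Data-processing inequality for maximal quantum leakage.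
For a Kraus channel E(ρ) = ∑_j E_j ρ E_jᴴ with ∑_j E_jᴴ E_j = I and any POVM
{F_y}, the adjoint family {∑_j E_jᴴ F_y E_j} is a POVM and the leakage values
agree; consequently the supremum of the leakage functional over POVMs on the
output is at most the supremum over POVMs on the input. -/
theorem data_processing_inequality {d d' n : ℕ}
    {X : Type} [Fintype X] [Nonempty X]
    (ρ : X → Matrix (Fin d) (Fin d) ℂ)
    (hρ : ∀ x, (ρ x).PosSemidef) (hρtr : ∀ x, (ρ x).trace = 1)
    (E : Fin n → Matrix (Fin d') (Fin d) ℂ)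
    (hE : ∑ j, (E j)ᴴ * E j = 1) :
    (∀ (m : ℕ) (F : Fin m → Matrix (Fin d') (Fin d') ℂ),
      (∀ y, (F y).PosSemidef) → (∑ y, F y = 1) →
      ((∀ y, (∑ j, (E j)ᴴ * F y * E j).PosSemidef) ∧
       (∑ y, ∑ j, (E j)ᴴ * F y * E j) = 1 ∧
       ∑ y, Finset.univ.sup' Finset.univ_nonempty
           (fun x => (((∑ j, E j * ρ x * (E j)ᴴ) * F y).trace).re)
         = ∑ y, Finset.univ.sup' Finset.univ_nonempty
           (fun x => ((ρ x * ∑ j, (E j)ᴴ * F y * E j).trace).re))) ∧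
    sSup {r : ℝ | ∃ (m : ℕ) (F : Fin m → Matrix (Fin d') (Fin d') ℂ),
        (∀ y, (F y).PosSemidef) ∧ (∑ y, F y = 1) ∧
        r = ∑ y, Finset.univ.sup' Finset.univ_nonempty
              (fun x => (((∑ j, E j * ρ x * (E j)ᴴ) * F y).trace).re)}
      ≤ sSup {r : ℝ | ∃ (m : ℕ) (F : Fin m → Matrix (Fin d) (Fin d) ℂ),
        (∀ y, (F y).PosSemidef) ∧ (∑ y, F y = 1) ∧
        r = ∑ y, Finset.univ.sup' Finset.univ_nonempty
              (fun x => ((ρ x * F y).trace).re)} := by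
  have key : ∀ (m : ℕ) (F : Fin m → Matrix (Fin d') (Fin d') ℂ),
      (∀ y, (F y).PosSemidef) → (∑ y, F y = 1) →
      ((∀ y, (∑ j, (E j)ᴴ * F y * E j).PosSemidef) ∧
       (∑ y, ∑ j, (E j)ᴴ * F y * E j) = 1 ∧
       ∑ y, Finset.univ.sup' Finset.univ_nonempty
           (fun x => (((∑ j, E j * ρ x * (E j)ᴴ) * F y).trace).re)
         = ∑ y, Finset.univ.sup' Finset.univ_nonempty
           (fun x => ((ρ x * ∑ j, (E j)ᴴ * F y * E j).trace).re)) := by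
    intro m F hF hF1
    have htr : ∀ (y : Fin m) (x : X),
        (((∑ j, E j * ρ x * (E j)ᴴ) * F y).trace)
          = ((ρ x * ∑ j, (E j)ᴴ * F y * E j).trace) := by
      intro y x
      rw [Finset.sum_mul, Matrix.trace_sum, Finset.mul_sum, Matrix.trace_sum]
      refine Finset.sum_congr rfl fun j _ => ?_
      rw [Matrix.mul_assoc (E j * ρ x), Matrix.trace_mul_comm,
        ← Matrix.mul_assoc, Matrix.trace_mul_comm]
    refine ⟨fun y => ?_, ?_, ?_⟩
    · exact Finset.sum_induction _ _ (fun a b ha hb => ha.add hb)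
        Matrix.PosSemidef.zero
        (fun j _ => (hF y).conjTranspose_mul_mul_same (E j))
    · rw [Finset.sum_comm]
      calc ∑ j, ∑ y, (E j)ᴴ * F y * E j
          = ∑ j, (E j)ᴴ * (∑ y, F y) * E j := by
            simp [Matrix.mul_sum, Matrix.sum_mul]
        _ = 1 := by rw [hF1]; simpa using hE
    · exact Finset.sum_congr rfl fun y _ =>
        Finset.sup'_congr _ rfl fun x _ => by rw [htr]
  refine ⟨key, ?_⟩
  have hbdd : BddAbove {r : ℝ | ∃ (m : ℕ) (F : Fin m → Matrix (Fin d) (Fin d) ℂ),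
      (∀ y, (F y).PosSemidef) ∧ (∑ y, F y = 1) ∧
      r = ∑ y, Finset.univ.sup' Finset.univ_nonempty
            (fun x => ((ρ x * F y).trace).re)} := by
    refine ⟨Fintype.card X, ?_⟩
    rintro r ⟨m, F, hF, hF1, rfl⟩
    have hnn : ∀ (y : Fin m) (x : X), 0 ≤ ((ρ x * F y).trace).re :=
      fun y x => trace_mul_re_nonneg (hρ x) (hF y)
    calc ∑ y, Finset.univ.sup' Finset.univ_nonempty
            (fun x => ((ρ x * F y).trace).re)
        ≤ ∑ y, ∑ x, ((ρ x * F y).trace).re := by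
          refine Finset.sum_le_sum fun y _ => ?_
          exact Finset.sup'_le _ _ fun x _ =>
            Finset.single_le_sum (fun x _ => hnn y x) (Finset.mem_univ x)
      _ = ∑ x : X, ∑ y, ((ρ x * F y).trace).re := Finset.sum_comm
      _ = ∑ x : X, ((ρ x * ∑ y, F y).trace).re := by
          refine Finset.sum_congr rfl fun x _ => ?_
          rw [Finset.mul_sum, Matrix.trace_sum, Complex.re_sum]
      _ = Fintype.card X := by
          simp [hF1, hρtr]
  refine csSup_le_csSup hbdd ?_ ?_
  · refine ⟨_, 1, fun _ => (1 : Matrix (Fin d') (Fin d') ℂ), fun _ => Matrix.PosSemidef.one, ?_, rfl⟩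
    simp
  · rintro r ⟨m, F, hF, hF1, rfl⟩
    obtain ⟨h1, h2, h3⟩ := key m F hF hF1
    exact ⟨m, fun y => ∑ j, (E j)ᴴ * F y * E j, h1, h2, h3⟩
end

section
/- Classical maximal leakage bounds mutual information: for jointly distributed finite random variables X, Y with all p_X(x) > 0, the mutual information I(X;Y) (in bits) is at most log₂(∑_y max_x P(Y=y|X=x)). Consequently accessible information of an ensemble is at most the maximal quantum leakage. -/
open BigOperators

/-- Classical maximal leakage bounds mutual information: for a joint
pmf p on finite X × Y with all marginals p_X(x) > 0,
I(X;Y) ≤ log₂(∑_y max_x P(Y=y|X=x)). -/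
theorem mutual_information_le_maximal_leakage
    {X Y : Type} [Fintype X] [Nonempty X] [Fintype Y]
    (p : X → Y → ℝ)
    (hp : ∀ x y, 0 ≤ p x y) (hsum : ∑ x, ∑ y, p x y = 1)
    (hpX : ∀ x, 0 < ∑ y, p x y) :
    ∑ x, ∑ y, p x y * Real.logb 2 (p x y / ((∑ y', p x y') * (∑ x', p x' y)))
      ≤ Real.logb 2 (∑ y, Finset.univ.sup' Finset.univ_nonempty
          (fun x => p x y / ∑ y', p x y')) := by
  classical
  set s : X → ℝ := fun x => ∑ y, p x y with hs
  set q : Y → ℝ := fun y => ∑ x, p x y with hq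
  set m : Y → ℝ := fun y => Finset.univ.sup' Finset.univ_nonempty (fun x => p x y / s x)
    with hmdef
  have hmx : ∀ x y, p x y / s x ≤ m y := fun x y =>
    Finset.le_sup' (fun x => p x y / s x) (Finset.mem_univ x)
  have hq0 : ∀ y, 0 ≤ q y := fun y => Finset.sum_nonneg fun x _ => hp x y
  have hm0 : ∀ y, 0 ≤ m y := by
    intro y
    obtain ⟨x⟩ := ‹Nonempty X›
    exact le_trans (div_nonneg (hp x y) (hpX x).le) (hmx x y)
  have hqm : ∀ y, 0 < q y → 0 < m y := by
    intro y hy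
    obtain ⟨x, -, hx⟩ := Finset.exists_lt_of_sum_lt (by simpa using hy :
      ∑ x : X, (0:ℝ) < ∑ x, p x y)
    exact lt_of_lt_of_le (div_pos hx (hpX x)) (hmx x y)
  have hqsum : ∑ y, q y = 1 := by rw [hq]; rw [← hsum]; exact Finset.sum_comm
  set S : ℝ := ∑ y, m y with hS
  have hS1 : (1:ℝ) ≤ S := by
    obtain ⟨x0⟩ := ‹Nonempty X›
    have h1 : ∑ y, p x0 y / s x0 = 1 := by
      rw [← Finset.sum_div]; exact div_self (hpX x0).ne'
    calc (1:ℝ) = ∑ y, p x0 y / s x0 := h1.symm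
    _ ≤ S := Finset.sum_le_sum fun y _ => hmx x0 y
  have hSpos : (0:ℝ) < S := lt_of_lt_of_le one_pos hS1
  -- Step 1: termwise bound
  have step1 : ∑ x, ∑ y, p x y * Real.logb 2 (p x y / (s x * q y))
      ≤ ∑ x, ∑ y, p x y * Real.logb 2 (m y / q y) := by
    apply Finset.sum_le_sum; intro x _
    apply Finset.sum_le_sum; intro y _
    rcases eq_or_lt_of_le (hp x y) with h0 | h0
    · simp [← h0]
    · have hqy : 0 < q y := lt_of_lt_of_le h0 (Finset.single_le_sum
        (fun x _ => hp x y) (Finset.mem_univ x))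
      have harg : 0 < p x y / (s x * q y) :=
        div_pos h0 (mul_pos (hpX x) hqy)
      have hle : p x y / (s x * q y) ≤ m y / q y := by
        rw [← div_div]
        exact (div_le_div_iff_of_pos_right hqy).mpr (hmx x y)
      exact mul_le_mul_of_nonneg_left
        (Real.logb_le_logb_of_le one_lt_two harg hle) (hp x y)
  -- Step 2: collapse the x-sum
  have step2 : ∑ x, ∑ y, p x y * Real.logb 2 (m y / q y)
      = ∑ y, q y * Real.logb 2 (m y / q y) := by
    rw [Finset.sum_comm]
    exact Finset.sum_congr rfl fun y _ => by rw [← Finset.sum_mul]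
  -- Step 3: Jensen via log t ≤ t - 1
  have key : ∑ y, q y * Real.log (m y / q y) ≤ Real.log S := by
    have hterm : ∀ y, q y * Real.log (m y / q y) - q y * Real.log S
        ≤ m y / S - q y := by
      intro y
      rcases eq_or_lt_of_le (hq0 y) with h0 | h0
      · rw [← h0]; simp [div_nonneg (hm0 y) hSpos.le]
      · have hmy := hqm y h0
        have harg : 0 < m y / q y / S := div_pos (div_pos hmy h0) hSpos
        have hlog := Real.log_le_sub_one_of_pos harg
        have heq : Real.log (m y / q y / S) = Real.log (m y / q y) - Real.log S :=
          Real.log_div (div_pos hmy h0).ne' hSpos.ne'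
        rw [heq] at hlog
        have := mul_le_mul_of_nonneg_left hlog h0.le
        calc q y * Real.log (m y / q y) - q y * Real.log S
            = q y * (Real.log (m y / q y) - Real.log S) := by ring
        _ ≤ q y * (m y / q y / S - 1) := this
        _ = m y / S - q y := by field_simp
    have hsum2 : ∑ y, (q y * Real.log (m y / q y) - q y * Real.log S)
        ≤ ∑ y, (m y / S - q y) := Finset.sum_le_sum fun y _ => hterm y
    have hrhs : ∑ y, (m y / S - q y) = 0 := by
      rw [Finset.sum_sub_distrib, ← Finset.sum_div, hqsum, ← hS,
        div_self hSpos.ne']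
      ring
    have hlhs : ∑ y, (q y * Real.log (m y / q y) - q y * Real.log S)
        = (∑ y, q y * Real.log (m y / q y)) - Real.log S := by
      rw [Finset.sum_sub_distrib, ← Finset.sum_mul, hqsum, one_mul]
    linarith [hsum2, hrhs.symm ▸ hsum2, hlhs ▸ hsum2]
  have step3 : ∑ y, q y * Real.logb 2 (m y / q y) ≤ Real.logb 2 S := by
    have hl2 : (0:ℝ) < Real.log 2 := Real.log_pos one_lt_two
    simp only [Real.logb]
    rw [show ∑ y, q y * (Real.log (m y / q y) / Real.log 2)
        = (∑ y, q y * Real.log (m y / q y)) / Real.log 2 by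
      rw [Finset.sum_div]; exact Finset.sum_congr rfl fun y _ => by ring]
    exact (div_le_div_iff_of_pos_right hl2).mpr key
  calc ∑ x, ∑ y, p x y * Real.logb 2 (p x y / (s x * q y))
      ≤ ∑ x, ∑ y, p x y * Real.logb 2 (m y / q y) := step1
  _ = ∑ y, q y * Real.logb 2 (m y / q y) := step2
  _ ≤ Real.logb 2 S := step3
end

section
/- Sup-normalized guessing identity (classical maximal leakage, one direction): for jointly distributed finite random variables X, Y with p_X(x) > 0 for all x, and for any random variables Z, Ẑ such that X → Y → Ẑ and Z → X form Markov chains (Z depends on X only, Ẑ depends on Y only), the ratio P(Z = Ẑ)/max_z P(Z = z) is at most ∑_y max_x P(Y=y|X=x). -/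
open BigOperators

/-- For Markov chains Z → X → Y → Ẑ (Z generated from X by kernel Kz,
Y from X by kernel W, Ẑ from Y by kernel Kh),
P(Z = Ẑ) / max_z P(Z = z) ≤ ∑_y max_x P(Y=y|X=x). -/
theorem guessing_ratio_le_maximal_leakage
    {X Y Z : Type} [Fintype X] [Nonempty X] [Fintype Y] [Fintype Z] [Nonempty Z]
    (pX : X → ℝ) (hpX : ∀ x, 0 < pX x) (hpXsum : ∑ x, pX x = 1)
    (W : X → Y → ℝ) (hW : ∀ x y, 0 ≤ W x y) (hWsum : ∀ x, ∑ y, W x y = 1)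
    (Kz : X → Z → ℝ) (hKz : ∀ x z, 0 ≤ Kz x z) (hKzsum : ∀ x, ∑ z, Kz x z = 1)
    (Kh : Y → Z → ℝ) (hKh : ∀ y z, 0 ≤ Kh y z) (hKhsum : ∀ y, ∑ z, Kh y z = 1) :
    (∑ z, ∑ x, pX x * Kz x z * (∑ y, W x y * Kh y z))
        / (Finset.univ.sup' Finset.univ_nonempty (fun z => ∑ x, pX x * Kz x z))
      ≤ ∑ y, Finset.univ.sup' Finset.univ_nonempty (fun x => W x y) := by
  set M : ℝ := Finset.univ.sup' Finset.univ_nonempty (fun z => ∑ x, pX x * Kz x z) with hM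
  have hsum1 : ∑ z, ∑ x, pX x * Kz x z = 1 := by
    rw [Finset.sum_comm]
    rw [show (∑ x, ∑ z, pX x * Kz x z) = ∑ x, pX x by
      apply Finset.sum_congr rfl; intro x _
      rw [← Finset.mul_sum, hKzsum, mul_one], hpXsum]
  have hle : ∀ z : Z, (∑ x, pX x * Kz x z) ≤ M := fun z =>
    Finset.le_sup' (f := fun z => ∑ x, pX x * Kz x z) (Finset.mem_univ z)
  have hMpos : 0 < M := by
    by_contra h
    push_neg at h
    have : (1 : ℝ) ≤ 0 := by
      rw [← hsum1]
      apply Finset.sum_nonpos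
      intro z _
      exact (hle z).trans h
    linarith
  rw [div_le_iff₀ hMpos]
  have key : ∀ y : Y, ∑ z, (∑ x, pX x * Kz x z * W x y) * Kh y z
      ≤ (Finset.univ.sup' Finset.univ_nonempty (fun x => W x y)) * M := by
    intro y
    set Sy : ℝ := Finset.univ.sup' Finset.univ_nonempty (fun x => W x y) with hSy
    have hSynn : 0 ≤ Sy := le_trans (hW (Classical.arbitrary X) y)
      (Finset.le_sup' (f := fun x => W x y) (Finset.mem_univ _))
    calc ∑ z, (∑ x, pX x * Kz x z * W x y) * Kh y z
        ≤ ∑ z, (Sy * M) * Kh y z := by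
          apply Finset.sum_le_sum
          intro z _
          apply mul_le_mul_of_nonneg_right _ (hKh y z)
          calc ∑ x, pX x * Kz x z * W x y
              ≤ ∑ x, pX x * Kz x z * Sy := by
                apply Finset.sum_le_sum
                intro x _
                exact mul_le_mul_of_nonneg_left
                  (Finset.le_sup' (f := fun x => W x y) (Finset.mem_univ x))
                  (mul_nonneg (hpX x).le (hKz x z))
            _ = (∑ x, pX x * Kz x z) * Sy := by rw [Finset.sum_mul]
            _ ≤ M * Sy := mul_le_mul_of_nonneg_right (hle z) hSynn
            _ = Sy * M := mul_comm _ _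
      _ = Sy * M := by rw [← Finset.mul_sum, hKhsum, mul_one]
  calc ∑ z, ∑ x, pX x * Kz x z * (∑ y, W x y * Kh y z)
      = ∑ y, ∑ z, (∑ x, pX x * Kz x z * W x y) * Kh y z := by
        simp_rw [Finset.mul_sum, Finset.sum_mul]
        rw [Finset.sum_comm]
        conv_rhs => enter [2, y]; rw [Finset.sum_comm]
        conv_rhs => rw [Finset.sum_comm]
        apply Finset.sum_congr rfl; intro x _
        conv_rhs => rw [Finset.sum_comm]
        apply Finset.sum_congr rfl; intro z _
        apply Finset.sum_congr rfl; intro y _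
        ring
    _ ≤ ∑ y, (Finset.univ.sup' Finset.univ_nonempty (fun x => W x y)) * M :=
        Finset.sum_le_sum (fun y _ => key y)
    _ = (∑ y, Finset.univ.sup' Finset.univ_nonempty (fun x => W x y)) * M := by
        rw [Finset.sum_mul]
end

section
/- Local depolarizing bound: if the channel M is any Kraus channel (∑_j E_j†E_j = I) on a d-dimensional space and N(ρ) := q·(I/d) + (1−q)·M(ρ) for q ∈ [0,1], then for every POVM {F_y}, ∑_y max_x Tr(N(ρ_x) F_y) ≤ q + (1−q)·S, where S is the supremum over POVMs of ∑_y max_x Tr(ρ_x F_y). Hence 2^{Q(X→A)_{N(ρ)}} ≤ q + (1−q)·2^{Q(X→A)_ρ}. -/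
open Matrix BigOperators ComplexOrder

private lemma cyc_trace {d : ℕ} (A R F : Matrix (Fin d) (Fin d) ℂ) :
    (A * R * Aᴴ * F).trace = (R * (Aᴴ * F * A)).trace := by
  simp only [Matrix.mul_assoc]
  rw [Matrix.trace_mul_comm A]
  simp only [Matrix.mul_assoc]

private lemma tr_re_nonneg {d : ℕ} {A B : Matrix (Fin d) (Fin d) ℂ}
    (hA : A.PosSemidef) (hB : B.PosSemidef) : 0 ≤ ((A * B).trace).re := by
  obtain ⟨C, rfl⟩ : ∃ C : Matrix (Fin d) (Fin d) ℂ, A = Cᴴ * C := by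
    open MatrixOrder in exact CStarAlgebra.nonneg_iff_eq_star_mul_self.mp hA.nonneg
  obtain ⟨D, rfl⟩ : ∃ D : Matrix (Fin d) (Fin d) ℂ, B = Dᴴ * D := by
    open MatrixOrder in exact CStarAlgebra.nonneg_iff_eq_star_mul_self.mp hB.nonneg
  have h1 : (Cᴴ * C * (Dᴴ * D)).trace = ((C * Dᴴ)ᴴ * (C * Dᴴ)).trace := by
    rw [Matrix.conjTranspose_mul, Matrix.conjTranspose_conjTranspose]
    simp only [Matrix.mul_assoc]
    rw [Matrix.trace_mul_comm Cᴴ]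
    simp only [Matrix.mul_assoc]
    rw [Matrix.trace_mul_comm C]
    simp only [Matrix.mul_assoc]
    rw [Matrix.trace_mul_comm Dᴴ]
    simp only [Matrix.mul_assoc]
  rw [h1]
  have : (((C * Dᴴ)ᴴ * (C * Dᴴ)).trace).re
      = ∑ i, ∑ j, Complex.normSq ((C * Dᴴ) j i) := by
    simp only [Matrix.trace, Matrix.diag, Matrix.mul_apply, Matrix.conjTranspose_apply,
      Complex.re_sum]
    refine Finset.sum_congr rfl fun i _ => Finset.sum_congr rfl fun j _ => ?_
    rw [Complex.star_def, mul_comm, Complex.mul_conj]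
    simp
  rw [this]
  exact Finset.sum_nonneg fun i _ => Finset.sum_nonneg fun j _ => Complex.normSq_nonneg _

private lemma psd_sum {d n : ℕ} {A : Fin n → Matrix (Fin d) (Fin d) ℂ}
    (h : ∀ j, (A j).PosSemidef) : (∑ j, A j).PosSemidef := by
  classical
  refine Finset.sum_induction _ _ (fun a b ha hb => ha.add hb) Matrix.PosSemidef.zero
    (fun j _ => h j)

/-- Local depolarizing bound: for N(ρ) = q·(I/d) + (1−q)·M(ρ) with M a
Kraus channel and q ∈ [0,1], for every POVM {F_y},
∑_y max_x Tr(N(ρ_x) F_y) ≤ q + (1−q)·S, where S is the sup of the leakage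
functional over POVMs; hence 2^{Q(X→A)_{N(ρ)}} ≤ q + (1−q)·2^{Q(X→A)_ρ}. -/
theorem local_depolarizing_bound {d n : ℕ} (hd : 0 < d)
    {X : Type} [Fintype X] [Nonempty X]
    (ρ : X → Matrix (Fin d) (Fin d) ℂ)
    (hρ : ∀ x, (ρ x).PosSemidef) (hρtr : ∀ x, (ρ x).trace = 1)
    (E : Fin n → Matrix (Fin d) (Fin d) ℂ)
    (hE : ∑ j, (E j)ᴴ * E j = 1)
    (q : ℝ) (hq0 : 0 ≤ q) (hq1 : q ≤ 1) :
    (∀ (m : ℕ) (F : Fin m → Matrix (Fin d) (Fin d) ℂ),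
      (∀ y, (F y).PosSemidef) → (∑ y, F y = 1) →
      ∑ y, Finset.univ.sup' Finset.univ_nonempty
          (fun x => (((((q / d : ℝ) : ℂ) • (1 : Matrix (Fin d) (Fin d) ℂ)
              + ((1 - q : ℝ) : ℂ) • ∑ j, E j * ρ x * (E j)ᴴ) * F y).trace).re)
        ≤ q + (1 - q) * sSup {r : ℝ | ∃ (m' : ℕ)
            (G : Fin m' → Matrix (Fin d) (Fin d) ℂ),
            (∀ y, (G y).PosSemidef) ∧ (∑ y, G y = 1) ∧
            r = ∑ y, Finset.univ.sup' Finset.univ_nonempty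
                  (fun x => ((ρ x * G y).trace).re)}) ∧
    sSup {r : ℝ | ∃ (m : ℕ) (F : Fin m → Matrix (Fin d) (Fin d) ℂ),
        (∀ y, (F y).PosSemidef) ∧ (∑ y, F y = 1) ∧
        r = ∑ y, Finset.univ.sup' Finset.univ_nonempty
          (fun x => (((((q / d : ℝ) : ℂ) • (1 : Matrix (Fin d) (Fin d) ℂ)
              + ((1 - q : ℝ) : ℂ) • ∑ j, E j * ρ x * (E j)ᴴ) * F y).trace).re)}
      ≤ q + (1 - q) * sSup {r : ℝ | ∃ (m : ℕ)
          (G : Fin m → Matrix (Fin d) (Fin d) ℂ),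
          (∀ y, (G y).PosSemidef) ∧ (∑ y, G y = 1) ∧
          r = ∑ y, Finset.univ.sup' Finset.univ_nonempty
                (fun x => ((ρ x * G y).trace).re)} := by
  set Sset : Set ℝ := {r : ℝ | ∃ (m : ℕ) (G : Fin m → Matrix (Fin d) (Fin d) ℂ),
      (∀ y, (G y).PosSemidef) ∧ (∑ y, G y = 1) ∧
      r = ∑ y, Finset.univ.sup' Finset.univ_nonempty
            (fun x => ((ρ x * G y).trace).re)} with hSset
  -- boundedness of the S-set
  have hbdd : BddAbove Sset := by
    refine ⟨(Fintype.card X : ℝ), ?_⟩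
    rintro r ⟨m, G, hG, hGsum, rfl⟩
    calc ∑ y, Finset.univ.sup' Finset.univ_nonempty (fun x => ((ρ x * G y).trace).re)
        ≤ ∑ y, ∑ x, ((ρ x * G y).trace).re := by
          refine Finset.sum_le_sum fun y _ => ?_
          refine Finset.sup'_le _ _ fun x _ => ?_
          exact Finset.single_le_sum (fun x' _ => tr_re_nonneg (hρ x') (hG y))
            (Finset.mem_univ x)
      _ = ∑ x, ∑ y, ((ρ x * G y).trace).re := Finset.sum_comm
      _ = ∑ x : X, (1 : ℝ) := by
          refine Finset.sum_congr rfl fun x _ => ?_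
          rw [← Complex.re_sum, ← Matrix.trace_sum, ← Finset.mul_sum, hGsum, mul_one,
            hρtr x, Complex.one_re]
      _ = (Fintype.card X : ℝ) := by simp
  -- S is at least 1 (membership of trivial POVM); in particular nonneg
  have hS0 : (0 : ℝ) ≤ sSup Sset := by
    have hmem : (1 : ℝ) ∈ Sset := by
      refine ⟨1, fun _ => 1, fun _ => Matrix.PosSemidef.one, by simp, ?_⟩
      rw [Fin.sum_univ_one]
      rw [show (fun x => ((ρ x * (1 : Matrix (Fin d) (Fin d) ℂ)).trace).re)
          = fun _ => (1 : ℝ) from funext fun x => by rw [mul_one, hρtr x, Complex.one_re]]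
      rw [Finset.sup'_const]
    linarith [le_csSup hbdd hmem]
  have hdC : ((d : ℝ)) ≠ 0 := Nat.cast_ne_zero.mpr hd.ne'
  -- main bound
  have main : ∀ (m : ℕ) (F : Fin m → Matrix (Fin d) (Fin d) ℂ),
      (∀ y, (F y).PosSemidef) → (∑ y, F y = 1) →
      ∑ y, Finset.univ.sup' Finset.univ_nonempty
          (fun x => (((((q / d : ℝ) : ℂ) • (1 : Matrix (Fin d) (Fin d) ℂ)
              + ((1 - q : ℝ) : ℂ) • ∑ j, E j * ρ x * (E j)ᴴ) * F y).trace).re)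
        ≤ q + (1 - q) * sSup Sset := by
    intro m F hF hFsum
    set G : Fin m → Matrix (Fin d) (Fin d) ℂ := fun y => ∑ j, (E j)ᴴ * F y * E j with hG
    have hGpsd : ∀ y, (G y).PosSemidef :=
      fun y => psd_sum fun j => (hF y).conjTranspose_mul_mul_same (E j)
    have hGsum : ∑ y, G y = 1 := by
      rw [hG]
      rw [Finset.sum_comm]
      calc ∑ j, ∑ y, (E j)ᴴ * F y * E j
          = ∑ j, (E j)ᴴ * (∑ y, F y) * E j := by
            refine Finset.sum_congr rfl fun j _ => ?_
            simp only [Finset.mul_sum, Finset.sum_mul]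
        _ = 1 := by rw [hFsum]; simpa using hE
    have hMtr : ∀ x y, ((∑ j, E j * ρ x * (E j)ᴴ) * F y).trace = (ρ x * G y).trace := by
      intro x y
      rw [Finset.sum_mul, Matrix.trace_sum, hG, Finset.mul_sum, Matrix.trace_sum]
      exact Finset.sum_congr rfl fun j _ => cyc_trace (E j) (ρ x) (F y)
    have hpt : ∀ y x, (((((q / d : ℝ) : ℂ) • (1 : Matrix (Fin d) (Fin d) ℂ)
          + ((1 - q : ℝ) : ℂ) • ∑ j, E j * ρ x * (E j)ᴴ) * F y).trace).re
        = (q / d) * ((F y).trace).re + (1 - q) * ((ρ x * G y).trace).re := by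
      intro y x
      rw [Matrix.add_mul, Matrix.smul_mul, Matrix.smul_mul, Matrix.one_mul,
        Matrix.trace_add, Matrix.trace_smul, Matrix.trace_smul, hMtr x y]
      simp [Complex.add_re, Complex.mul_re]
    have hFtr : ∑ y, ((F y).trace).re = (d : ℝ) := by
      rw [← Complex.re_sum, ← Matrix.trace_sum, hFsum]
      simp
    calc ∑ y, Finset.univ.sup' Finset.univ_nonempty
            (fun x => (((((q / d : ℝ) : ℂ) • (1 : Matrix (Fin d) (Fin d) ℂ)
              + ((1 - q : ℝ) : ℂ) • ∑ j, E j * ρ x * (E j)ᴴ) * F y).trace).re)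
        ≤ ∑ y, ((q / d) * ((F y).trace).re
            + (1 - q) * Finset.univ.sup' Finset.univ_nonempty
                (fun x => ((ρ x * G y).trace).re)) := by
          refine Finset.sum_le_sum fun y _ => ?_
          refine Finset.sup'_le _ _ fun x _ => ?_
          rw [hpt y x]
          have h1x : (1 - q) * ((ρ x * G y).trace).re
              ≤ (1 - q) * Finset.univ.sup' Finset.univ_nonempty
                  (fun x => ((ρ x * G y).trace).re) :=
            mul_le_mul_of_nonneg_left
              (Finset.le_sup' (fun x => ((ρ x * G y).trace).re) (Finset.mem_univ x))
              (by linarith)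
          linarith
      _ = (q / d) * (∑ y, ((F y).trace).re)
            + (1 - q) * ∑ y, Finset.univ.sup' Finset.univ_nonempty
                (fun x => ((ρ x * G y).trace).re) := by
          rw [Finset.sum_add_distrib, Finset.mul_sum, Finset.mul_sum]
      _ ≤ q + (1 - q) * sSup Sset := by
          rw [hFtr, div_mul_cancel₀ q hdC]
          have hle : ∑ y, Finset.univ.sup' Finset.univ_nonempty
              (fun x => ((ρ x * G y).trace).re) ≤ sSup Sset :=
            le_csSup hbdd ⟨m, G, hGpsd, hGsum, rfl⟩
          nlinarith
  refine ⟨main, ?_⟩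
  refine Real.sSup_le ?_ (by nlinarith)
  rintro r ⟨m, F, hF, hFsum, rfl⟩
  exact main m F hF hFsum
end
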